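/- arXiv:1511.03171 — 4 statements merged into one kernel-verified Lean document; each statement's English description precedes it below -/
import Mathlib

section
/- Let A be a set equipped with two group structures (a,b) ↦ a·b and (a,b) ↦ a∘b, and for a ∈ A define λ_a : A → A by λ_a(b) = a⁻¹·(a∘b). Then the following are equivalent: (1) a∘(b·c) = (a∘b)·a⁻¹·(a∘c) for all a,b,c ∈ A (i.e. A is a skew left brace); (2) λ_{a∘b}(c) = λ_a(λ_b(c)) for all a,b,c ∈ A; (3) λ_a(b·c) = λ_a(b)·λ_a(c) for all a,b,c ∈ A. -/
/-!
With `λ_a(b) = a⁻¹ · (a ∘ b)`, the brace identity is `a⁻¹` times the statement that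
`λ_a` is multiplicative, so (1) ⇔ (3). If every `λ_a` is a group endomorphism, then
`λ_a(b⁻¹ · (b ∘ c)) = (a ∘ b)⁻¹ · a · λ_a(b ∘ c) = (a ∘ b)⁻¹ · (a ∘ (b ∘ c))`,
which is (2) by associativity of `∘`. Conversely, given (2), write `b · c = b ∘ c'`;
then `λ_b(c') = c` and (2) reads `a ∘ (b · c) = (a ∘ b) · λ_a(c)`, which is (3).
-/

namespace SkewLeftBrace

variable {A : Type*} [Group A] (circ : A → A → A)

def lam (a b : A) : A := a⁻¹ * circ a b

theorem lam_mul_iff (a b c : A) :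
    lam circ a (b * c) = lam circ a b * lam circ a c ↔
      circ a (b * c) = circ a b * a⁻¹ * circ a c := by
  have : lam circ a b * lam circ a c = a⁻¹ * (circ a b * a⁻¹ * circ a c) := by
    simp only [lam]; group
  rw [this, lam, mul_right_inj]

variable {circ}

def lamHom (lam_mul : ∀ a b c, lam circ a (b * c) = lam circ a b * lam circ a c) (a : A) :
    A →* A :=
  MonoidHom.mk' (lam circ a) (lam_mul a)

theorem lam_circ_of_lam_mul (circ_assoc : ∀ a b c, circ (circ a b) c = circ a (circ b c))
    (lam_mul : ∀ a b c, lam circ a (b * c) = lam circ a b * lam circ a c) (a b c : A) :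
    lam circ (circ a b) c = lam circ a (lam circ b c) := by
  have hom : lam circ a (lam circ b c) = (lam circ a b)⁻¹ * lam circ a (circ b c) := by
    let f := lamHom lam_mul a
    change f (b⁻¹ * circ b c) = (f b)⁻¹ * f (circ b c)
    rw [map_mul, map_inv]
  rw [hom]
  simp only [lam, circ_assoc]
  group

theorem lam_mul_of_lam_circ (circ_assoc : ∀ a b c, circ (circ a b) c = circ a (circ b c))
    (circ_surjective : ∀ b, Function.Surjective (circ b))
    (lam_circ : ∀ a b c, lam circ (circ a b) c = lam circ a (lam circ b c)) (a b c : A) :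
    lam circ a (b * c) = lam circ a b * lam circ a c := by
  obtain ⟨c', hc'⟩ := circ_surjective b (b * c)
  have hlam : lam circ b c' = c := by rw [lam, hc', inv_mul_cancel_left]
  have h := lam_circ a b c'
  rw [hlam, lam, circ_assoc, hc'] at h
  rw [← h]
  simp only [lam]
  group

end SkewLeftBrace

open SkewLeftBrace in
theorem skewLeftBrace_tfae_general {A : Type*} [Group A] (circ : A → A → A)
    (circ_assoc : ∀ a b c : A, circ (circ a b) c = circ a (circ b c))
    (e : A) (e_circ : ∀ a : A, circ e a = a)
    (cinv : A → A)
    (circ_cinv : ∀ a : A, circ a (cinv a) = e) :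
    List.TFAE
      [∀ a b c : A, circ a (b * c) = circ a b * a⁻¹ * circ a c,
       ∀ a b c : A, (circ a b)⁻¹ * circ (circ a b) c = a⁻¹ * circ a (b⁻¹ * circ b c),
       ∀ a b c : A, a⁻¹ * circ a (b * c) = (a⁻¹ * circ a b) * (a⁻¹ * circ a c)] := by
  have circ_surjective : ∀ b, Function.Surjective (circ b) := fun b x =>
    ⟨circ (cinv b) x, by rw [← circ_assoc, circ_cinv, e_circ]⟩
  tfae_have 1 ↔ 3 := forall₃_congr fun a b c => (lam_mul_iff circ a b c).symm
  tfae_have 3 → 2 := lam_circ_of_lam_mul circ_assoc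
  tfae_have 2 → 3 := lam_mul_of_lam_circ circ_assoc circ_surjective
  tfae_finish

/-- Gateva-Ivanova/Rump criterion: given two group structures on a set `A`
(one the ambient group `(A, ·)`, the other given by `circ` with identity `e`
and inverse `cinv`), and `λ_a (b) = a⁻¹ · (a ∘ b)`, the following are equivalent:
(1) `a ∘ (b·c) = (a ∘ b) · a⁻¹ · (a ∘ c)` (i.e. `A` is a skew left brace);
(2) `λ_{a ∘ b} (c) = λ_a (λ_b (c))`;
(3) `λ_a (b·c) = λ_a (b) · λ_a (c)`. -/
theorem skewLeftBrace_tfae {A : Type*} [Group A] (circ : A → A → A)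
    (circ_assoc : ∀ a b c : A, circ (circ a b) c = circ a (circ b c))
    (e : A) (e_circ : ∀ a : A, circ e a = a) (circ_e : ∀ a : A, circ a e = a)
    (cinv : A → A) (cinv_circ : ∀ a : A, circ (cinv a) a = e)
    (circ_cinv : ∀ a : A, circ a (cinv a) = e) :
    List.TFAE
      [∀ a b c : A, circ a (b * c) = circ a b * a⁻¹ * circ a c,
       ∀ a b c : A, (circ a b)⁻¹ * circ (circ a b) c = a⁻¹ * circ a (b⁻¹ * circ b c),
       ∀ a b c : A, a⁻¹ * circ a (b * c) = (a⁻¹ * circ a b) * (a⁻¹ * circ a c)] :=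
  skewLeftBrace_tfae_general circ circ_assoc e e_circ cinv circ_cinv
end

section
/- Let G be a group acting on a group (A,·) by automorphisms via (g,a) ↦ g·a, and let π : G → A be a bijective 1-cocycle, i.e. π(gh) = π(g)·(g·π(h)) for all g,h ∈ G. Define a second operation on A by a∘b = π(π⁻¹(a)π⁻¹(b)). Then (A,∘) is a group and a∘(b·c) = (a∘b)·a⁻¹·(a∘c) holds for all a,b,c ∈ A, so A becomes a skew left brace. -/
/-! The group axioms for `∘` hold because `∘` is the product of `G` transported along `π`.
The cocycle identity rewrites it as `a ∘ b = a · (π⁻¹ a • b)`, so left `∘`-multiplication by `a`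
is an automorphism of `(A, ·)` followed by left multiplication by `a`, and every such map `f`
satisfies `f (b · c) = f b · a⁻¹ · f c`. -/

theorem mul_smul_mul_eq_mul_smul_mul_inv_mul_mul_smul {M A : Type*} [Monoid M] [Group A]
    [MulDistribMulAction M A] (g : M) (a b c : A) :
    a * g • (b * c) = a * g • b * a⁻¹ * (a * g • c) := by
  rw [smul_mul']
  group

theorem Equiv.apply_symm_mul_symm_of_cocycle {G A : Type*} [Group G] [Group A]
    [MulDistribMulAction G A] (π : G ≃ A) (hπ : ∀ g h : G, π (g * h) = π g * (g • π h))
    (a b : A) : π (π.symm a * π.symm b) = a * π.symm a • b := by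
  rw [hπ, π.apply_symm_apply, π.apply_symm_apply]

/-- Let `G` be a group acting on a group `(A, ·)` by automorphisms and let `π : G → A`
be a bijective 1-cocycle, i.e. `π (g h) = π g · (g • π h)`. Then the operation
`a ∘ b = π (π⁻¹ a * π⁻¹ b)` makes `A` into a group, and
`a ∘ (b · c) = (a ∘ b) · a⁻¹ · (a ∘ c)` holds, so `A` is a skew left brace. -/
theorem bijectiveCocycle_gives_skewLeftBrace {G A : Type*} [Group G] [Group A]
    [MulDistribMulAction G A] (π : G ≃ A)
    (hπ : ∀ g h : G, π (g * h) = π g * (g • π h))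
    (circ : A → A → A) (hcirc : ∀ a b : A, circ a b = π (π.symm a * π.symm b)) :
    (∀ a b c : A, circ (circ a b) c = circ a (circ b c)) ∧
    (∀ a : A, circ (π 1) a = a ∧ circ a (π 1) = a) ∧
    (∀ a : A, circ a (π (π.symm a)⁻¹) = π 1 ∧ circ (π (π.symm a)⁻¹) a = π 1) ∧
    (∀ a b c : A, circ a (b * c) = circ a b * a⁻¹ * circ a c) := by
  refine ⟨fun a b c => by simp [hcirc, mul_assoc],
    fun a => by simp [hcirc], fun a => by simp [hcirc], fun a b c => ?_⟩
  simp only [hcirc, π.apply_symm_mul_symm_of_cocycle hπ]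
  exact mul_smul_mul_eq_mul_smul_mul_inv_mul_mul_smul _ _ _ _
end

section
/- Let A be a skew left brace. Then for every a ∈ Soc(A) = {a ∈ A : a∘b = a·b and b·(b∘a) = (b∘a)·b for all b ∈ A} and every b ∈ A one has λ_b(a) = b∘a∘b̄, where b̄ is the inverse of b in the group (A,∘). -/
/-- A skew left brace structure on a group `(A, ·)`: a second group structure
`(a, b) ↦ circ a b` (with identity `circOne` and inverse `circInv`) satisfying
`a ∘ (b · c) = (a ∘ b) · a⁻¹ · (a ∘ c)`. -/
structure SkewLeftBrace (A : Type*) [Group A] where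
  circ : A → A → A
  circ_assoc : ∀ a b c : A, circ (circ a b) c = circ a (circ b c)
  circOne : A
  circOne_circ : ∀ a : A, circ circOne a = a
  circ_circOne : ∀ a : A, circ a circOne = a
  circInv : A → A
  circInv_circ : ∀ a : A, circ (circInv a) a = circOne
  circ_circInv : ∀ a : A, circ a (circInv a) = circOne
  circ_mul : ∀ a b c : A, circ a (b * c) = circ a b * a⁻¹ * circ a c

/-!
Because `a` is in the socle, `(b ∘ a) ∘ b̄ = b ∘ (a · b̄)`, and the brace relation together with
`b ∘ b̄ = 1` turns this into `(b ∘ a) · b⁻¹`; the second socle condition says exactly that `b⁻¹`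
commutes with `b ∘ a`.
-/

namespace SkewLeftBrace

variable {A : Type*} [Group A] (S : SkewLeftBrace A)

theorem circ_one (x : A) : S.circ x 1 = x := by
  have h := S.circ_mul x 1 1
  rw [mul_one, mul_assoc, left_eq_mul, inv_mul_eq_one] at h
  exact h.symm

theorem circOne_eq_one : S.circOne = 1 := by
  simpa only [circ_one] using S.circOne_circ 1

theorem circ_mul_circInv (x y : A) : S.circ x (y * S.circInv x) = S.circ x y * x⁻¹ := by
  rw [S.circ_mul, S.circ_circInv, circOne_eq_one, mul_one]

end SkewLeftBrace

/-- For every `a` in the socle of a skew left brace `A` and every `b ∈ A` one has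
`λ_b (a) = b ∘ a ∘ b̄`, where `b̄` is the inverse of `b` in `(A, ∘)`. -/
theorem skewLeftBrace_lambda_socle {A : Type*} [Group A] (S : SkewLeftBrace A) (a : A)
    (ha : (∀ b : A, S.circ a b = a * b) ∧ ∀ b : A, b * S.circ b a = S.circ b a * b)
    (b : A) :
    b⁻¹ * S.circ b a = S.circ (S.circ b a) (S.circInv b) := by
  obtain ⟨hmul, hcomm⟩ := ha
  rw [S.circ_assoc, hmul, S.circ_mul_circInv]
  exact (Commute.inv_left (hcomm b)).eq
end

section
/- Let (A,·) be a group and H a regular subgroup of Hol(A,·). Define for a,b ∈ A the operation a∘b = a·f(b), where (f,a) = (π₂|_H)⁻¹(a) is the unique element of H whose second coordinate is a. Then (A,∘) is a group, a∘(b·c) = (a∘b)·a⁻¹·(a∘c) holds for all a,b,c ∈ A (so A is a skew left brace), and the group (A,∘) is isomorphic to H. -/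
/-!
Regularity at `a = 1` says that `1` is the only element of `H` with trivial `A`-coordinate,
so the projection `(f, a) ↦ a` is injective on `H`. Hence `σ` is a bijection `A → H`, and since
the `A`-coordinate of `(f, a)(g, b)` is `a · f(b) = a ∘ b`, it turns `∘` into the product of `H`:
`(A, ∘)` is a copy of `H`. The brace identity only uses that each `f` is an automorphism.
-/

/-- The holomorph `Hol(A) = Aut(A) ⋉ A` of a group `A`, realized as the semidirect
product `A ⋊ Aut(A)`; an element `h` has components `h.left ∈ A` and
`h.right ∈ Aut(A)`, and multiplication satisfies
`(f, a)(g, b) = (fg, a · f(b))`. -/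
abbrev Hol (A : Type*) [Group A] :=
  SemidirectProduct A (MulAut A) (MonoidHom.id (MulAut A))

/-- A subgroup `H` of `Hol(A)` is regular if for each `a ∈ A` there is a unique
`(f, x) ∈ H` with `x · f(a) = 1`. -/
def IsRegularSubgroup {A : Type*} [Group A] (H : Subgroup (Hol A)) : Prop :=
  ∀ a : A, ∃! h : Hol A, h ∈ H ∧ h.left * h.right a = 1

theorem mul_map_mul_eq_mul_map_mul_inv_mul {A F : Type*} [Group A] [FunLike F A A]
    [MulHomClass F A A] (f : F) (a b c : A) : a * f (b * c) = a * f b * a⁻¹ * (a * f c) := by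
  rw [map_mul]
  group

namespace IsRegularSubgroup

variable {A : Type*} [Group A] {H : Subgroup (Hol A)}

theorem eq_one_of_left_eq_one (hreg : IsRegularSubgroup H) {h : Hol A} (hh : h ∈ H)
    (hl : h.left = 1) : h = 1 := by
  obtain ⟨u, -, hu⟩ := hreg 1
  rw [hu h ⟨hh, by simp [hl]⟩, hu 1 ⟨H.one_mem, by simp⟩]

theorem left_injOn (hreg : IsRegularSubgroup H) :
    Set.InjOn SemidirectProduct.left (H : Set (Hol A)) := by
  intro h hh h' hh' hl
  have hl' : (h⁻¹ * h').left = 1 := by simp [hl]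
  exact inv_mul_eq_one.mp (hreg.eq_one_of_left_eq_one (H.mul_mem (H.inv_mem hh) hh') hl')

variable {σ : A → Hol A} (hmem : ∀ a, σ a ∈ H) (hleft : ∀ a, (σ a).left = a)
include hmem hleft

theorem section_left_eq (hreg : IsRegularSubgroup H) {h : Hol A} (hh : h ∈ H) :
    σ h.left = h :=
  hreg.left_injOn (hmem _) hh (hleft _)

theorem section_mul_map (hreg : IsRegularSubgroup H) (a b : A) :
    σ (a * (σ a).right b) = σ a * σ b := by
  have h := hreg.section_left_eq hmem hleft (H.mul_mem (hmem a) (hmem b))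
  rwa [SemidirectProduct.mul_left, hleft, hleft] at h

end IsRegularSubgroup

/-- Let `(A, ·)` be a group and `H` a regular subgroup of `Hol(A, ·)`. For `a ∈ A` let
`σ a = (f, a)` be the unique element of `H` with second coordinate `a`, and define
`a ∘ b = a · f(b)`. Then `(A, ∘)` is a group, `A` is a skew left brace
(`a ∘ (b·c) = (a ∘ b) · a⁻¹ · (a ∘ c)`), and `σ : (A, ∘) → H` is a group isomorphism. -/
theorem regularSubgroup_gives_skewLeftBrace {A : Type*} [Group A] (H : Subgroup (Hol A))
    (hreg : IsRegularSubgroup H) (σ : A → Hol A)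
    (hmem : ∀ a : A, σ a ∈ H) (hleft : ∀ a : A, (σ a).left = a)
    (circ : A → A → A) (hcirc : ∀ a b : A, circ a b = a * (σ a).right b) :
    (∀ a b c : A, circ (circ a b) c = circ a (circ b c)) ∧
    (∃ e : A, (∀ a : A, circ e a = a ∧ circ a e = a) ∧
      ∀ a : A, ∃ b : A, circ a b = e ∧ circ b a = e) ∧
    (∀ a b c : A, circ a (b * c) = circ a b * a⁻¹ * circ a c) ∧
    Function.Injective σ ∧
    Set.range σ = (H : Set (Hol A)) ∧
    (∀ a b : A, σ (circ a b) = σ a * σ b) := by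
  have hinj : Function.Injective σ := fun a b h => by rw [← hleft a, ← hleft b, h]
  have hmul (a b : A) : σ (circ a b) = σ a * σ b := by
    rw [hcirc, hreg.section_mul_map hmem hleft]
  have hσ (h : Hol A) (hh : h ∈ H) : σ h.left = h := hreg.section_left_eq hmem hleft hh
  have hσ_one : σ 1 = 1 := hσ 1 H.one_mem
  have hσ_inv (a : A) : σ (σ a)⁻¹.left = (σ a)⁻¹ := hσ _ (H.inv_mem (hmem a))
  refine ⟨fun a b c => hinj ?_, ⟨1, fun a => ⟨?_, ?_⟩, fun a => ⟨(σ a)⁻¹.left, hinj ?_, hinj ?_⟩⟩,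
    fun a b c => ?_, hinj, ?_, hmul⟩
  · rw [hmul, hmul, hmul, hmul, mul_assoc]
  · rw [hcirc, hσ_one, one_mul]; rfl
  · rw [hcirc, map_one, mul_one]
  · rw [hmul, hσ_inv, hσ_one, mul_inv_cancel]
  · rw [hmul, hσ_inv, hσ_one, inv_mul_cancel]
  · simp only [hcirc]
    exact mul_map_mul_eq_mul_map_mul_inv_mul _ a b c
  · exact Set.Subset.antisymm (Set.range_subset_iff.mpr hmem) fun h hh => ⟨h.left, hσ h hh⟩
end
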